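/- arXiv:1902.05482 — 4 statements merged into one kernel-verified Lean document; each statement's English description precedes it below -/
import Mathlib

section
/- Under monotonicity and unconfoundedness, the false-negative probability satisfies P(f(X) = -1, R = +1) = (1/4)·E[(1 - f(X))·Y·T/Q] for any measurable classifier f : ℝ^p → {-1, +1}. -/
/-!
Write `N = {f(X) = -1}`, so that `1 - f(X) = 2·1_N` with `N` measurable for `σ(X)`, and
`Y T / Q = 1_{T=1} Y(+1) / e(X) - 1_{T=-1} Y(-1) / (1 - e(X))`. Inverse propensity weighting
removes the treatment indicator from each arm: since `Y(t)` and `T` are conditionally independent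
given `X` and the propensity of the arm is `σ(X)`-measurable,
`E[1_N 1_{T=t} Y(t) / P(T=t | X)] = E[1_N Y(t)]`. Hence the right-hand side equals
`(1/2)·E[1_N (Y(+1) - Y(-1))]`, and by monotonicity `Y(+1) - Y(-1) = 2·1_{R=+1}`.
-/

open MeasureTheory ProbabilityTheory ENNReal

section BinaryVariables

variable {Ω : Type*}

theorem indicator_eq_sub_of_eq_one_or_eq_neg_one {Z : Ω → ℝ}
    (hZ : ∀ ω, Z ω = 1 ∨ Z ω = -1) (B : Set Ω) :
    B.indicator Z = fun ω =>
      (Z ⁻¹' {1} ∩ B).indicator (fun _ => 1) ω - (Z ⁻¹' {-1} ∩ B).indicator (fun _ => 1) ω := by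
  ext ω
  by_cases hB : ω ∈ B <;> rcases hZ ω with h | h <;> norm_num [Set.indicator_apply, h, hB]

theorem mul_div_propensity_eq_sub {T Yp Ym Y e Q : Ω → ℝ} (hTv : ∀ ω, T ω = 1 ∨ T ω = -1)
    (hQ : ∀ ω, Q ω = 1 / 2 + (e ω - 1 / 2) * T ω)
    (hY : ∀ ω, Y ω = if T ω = 1 then Yp ω else Ym ω) (ω : Ω) :
    Y ω * T ω / Q ω
      = (T ⁻¹' {1}).indicator Yp ω / e ω - (T ⁻¹' {-1}).indicator Ym ω / (1 - e ω) := by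
  rw [hQ, hY]
  rcases hTv ω with h | h <;> norm_num [Set.indicator_apply, h]
  ring

theorem sub_eq_two_mul_indicator_lt {Yp Ym : Ω → ℝ} (hYpv : ∀ ω, Yp ω = 1 ∨ Yp ω = -1)
    (hYmv : ∀ ω, Ym ω = 1 ∨ Ym ω = -1) (mono : ∀ ω, Ym ω ≤ Yp ω) (ω : Ω) :
    Yp ω - Ym ω = 2 * {ω | Ym ω < Yp ω}.indicator (fun _ => 1) ω := by
  rcases hYpv ω with hp | hp <;> rcases hYmv ω with hm | hm <;>
    norm_num [Set.indicator_apply, hp, hm]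
  linarith [mono ω]

theorem integrable_of_eq_one_or_eq_neg_one [MeasurableSpace Ω] {μ : Measure Ω}
    [IsFiniteMeasure μ] {Z : Ω → ℝ} (hZ : Measurable Z) (hZv : ∀ ω, Z ω = 1 ∨ Z ω = -1) :
    Integrable Z μ :=
  .of_bound hZ.aestronglyMeasurable 1 (.of_forall fun ω => by rcases hZv ω with h | h <;> simp [h])

theorem setIntegral_sub_eq_two_mul_measureReal_lt [MeasurableSpace Ω] {μ : Measure Ω}
    [IsFiniteMeasure μ] {Yp Ym : Ω → ℝ} (hYp : Measurable Yp) (hYm : Measurable Ym)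
    (hYpv : ∀ ω, Yp ω = 1 ∨ Yp ω = -1) (hYmv : ∀ ω, Ym ω = 1 ∨ Ym ω = -1)
    (mono : ∀ ω, Ym ω ≤ Yp ω) (N : Set Ω) :
    ∫ ω in N, Yp ω ∂μ - ∫ ω in N, Ym ω ∂μ = 2 * μ.real (N ∩ {ω | Ym ω < Yp ω}) := by
  rw [← integral_sub (integrable_of_eq_one_or_eq_neg_one hYp hYpv).restrict
    (integrable_of_eq_one_or_eq_neg_one hYm hYmv).restrict]
  simp_rw [sub_eq_two_mul_indicator_lt hYpv hYmv mono]
  rw [integral_const_mul, integral_indicator_const _ (measurableSet_lt hYm hYp),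
    measureReal_restrict_apply (measurableSet_lt hYm hYp), smul_eq_mul, mul_one, Set.inter_comm]

end BinaryVariables

section InversePropensityWeighting

variable {Ω : Type*} {m mΩ : MeasurableSpace Ω} {μ : Measure[mΩ] Ω}

theorem lintegral_mul_condLExp (hm : m ≤ mΩ) [SigmaFinite (μ.trim hm)] {X H : Ω → ℝ≥0∞}
    (hX : AEMeasurable X μ) (hH : Measurable[m] H) :
    ∫⁻ ω, H ω * X ω ∂μ = ∫⁻ ω, H ω * μ⁻[X|m] ω ∂μ := by
  have hXm : AEMeasurable (μ⁻[X|m]) μ := (measurable_condLExp' m μ X).aemeasurable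
  refine Measurable.ennreal_induction (motive := fun H =>
    ∫⁻ ω, H ω * X ω ∂μ = ∫⁻ ω, H ω * μ⁻[X|m] ω ∂μ) ?indicator ?add ?iSup hH
  case indicator =>
    intro c s hs
    simp only [← Set.indicator_mul_left, lintegral_indicator (hm s hs)]
    rw [lintegral_const_mul'' c hX.restrict, lintegral_const_mul'' c hXm.restrict,
      setLIntegral_condLExp hm μ X hs]
  case add =>
    intro F G _ hF hG hPF hPG
    simp only [Pi.add_apply, add_mul]
    rw [lintegral_add_left' (f := fun ω => F ω * X ω) ((hF.mono hm le_rfl).aemeasurable.mul hX),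
      lintegral_add_left' (f := fun ω => F ω * μ⁻[X|m] ω)
        ((hF.mono hm le_rfl).aemeasurable.mul hXm), hPF, hPG]
  case iSup =>
    intro F hF hmono hP
    simp only [ENNReal.iSup_mul]
    rw [lintegral_iSup' (f := fun n ω => F n ω * X ω)
        (fun n => ((hF n).mono hm le_rfl).aemeasurable.mul hX)
        (.of_forall fun ω i j hij => mul_le_mul_left (hmono hij ω) _),
      lintegral_iSup' (f := fun n ω => F n ω * μ⁻[X|m] ω)
        (fun n => ((hF n).mono hm le_rfl).aemeasurable.mul hXm)
        (.of_forall fun ω i j hij => mul_le_mul_left (hmono hij ω) _)]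
    exact iSup_congr hP

-- The weight `1 / d` may be unbounded, so the computation is done with lower Lebesgue integrals;
-- this also yields the integrability of the weighted indicator.
theorem setLIntegral_ofReal_inter_indicator_div [IsFiniteMeasure μ] {N A B : Set Ω}
    {d : Ω → ℝ} (hm : m ≤ mΩ) (hN : MeasurableSet[m] N) (hA : MeasurableSet A)
    (hB : MeasurableSet B) (hd : Measurable[m] d) (hd0 : ∀ ω, 0 < d ω)
    (hAB : μ⟦A ∩ B | m⟧ =ᵐ[μ] fun ω => (μ⟦A | m⟧) ω * d ω) :
    ∫⁻ ω in N, ENNReal.ofReal ((A ∩ B).indicator (fun _ => 1) ω / d ω) ∂μ = μ (N ∩ A) := by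
  set H : Ω → ℝ≥0∞ := N.indicator fun ω => ENNReal.ofReal (d ω)⁻¹
  have hH : Measurable[m] H := (ENNReal.measurable_ofReal.comp hd.inv).indicator hN
  have ofReal_condExp (s : Set Ω) (hs : MeasurableSet s) :
      μ⁻[fun ω => ENNReal.ofReal (s.indicator (fun _ => 1) ω) | m]
        =ᵐ[μ] fun ω => ENNReal.ofReal ((μ⟦s | m⟧) ω) :=
    condLExp_ofReal m ((integrable_const 1).indicator hs)
      (.of_forall (Set.indicator_nonneg fun _ _ => zero_le_one))
  calc ∫⁻ ω in N, ENNReal.ofReal ((A ∩ B).indicator (fun _ => 1) ω / d ω) ∂μ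
      = ∫⁻ ω, H ω * ENNReal.ofReal ((A ∩ B).indicator (fun _ => 1) ω) ∂μ := by
        rw [← lintegral_indicator (hm N hN)]
        refine lintegral_congr fun ω => ?_
        by_cases hω : ω ∈ N
        · simp [H, hω, div_eq_inv_mul, ENNReal.ofReal_mul, (hd0 ω).le]
        · simp [H, hω]
    _ = ∫⁻ ω, H ω * ENNReal.ofReal ((μ⟦A | m⟧) ω * d ω) ∂μ := by
        rw [lintegral_mul_condLExp hm
          (measurable_const.indicator (hA.inter hB)).ennreal_ofReal.aemeasurable hH]
        refine lintegral_congr_ae ?_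
        filter_upwards [ofReal_condExp _ (hA.inter hB), hAB] with ω h1 h2
        rw [h1, h2]
    _ = ∫⁻ ω in N, ENNReal.ofReal ((μ⟦A | m⟧) ω) ∂μ := by
        rw [← lintegral_indicator (hm N hN)]
        refine lintegral_congr fun ω => ?_
        by_cases hω : ω ∈ N
        · rw [Set.indicator_of_mem hω, show H ω = _ from Set.indicator_of_mem hω _,
            ← ENNReal.ofReal_mul (inv_nonneg.2 (hd0 ω).le), mul_comm ((μ⟦A | m⟧) ω),
            inv_mul_cancel_left₀ (hd0 ω).ne']
        · simp [H, hω]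
    _ = μ (N ∩ A) := by
        rw [← lintegral_congr_ae (ae_restrict_of_ae (ofReal_condExp A hA)),
          setLIntegral_condLExp hm μ _ hN]
        have hA1 : (fun ω => ENNReal.ofReal (A.indicator (fun _ => 1) ω)) = A.indicator 1 := by
          ext ω; by_cases hω : ω ∈ A <;> simp [hω]
        rw [hA1, lintegral_indicator_one hA, Measure.restrict_apply hA, Set.inter_comm]

theorem integrableOn_inter_indicator_div_and_setIntegral_eq [IsFiniteMeasure μ]
    {N A B : Set Ω} {d : Ω → ℝ} (hm : m ≤ mΩ) (hN : MeasurableSet[m] N)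
    (hA : MeasurableSet A) (hB : MeasurableSet B) (hd : Measurable[m] d) (hd0 : ∀ ω, 0 < d ω)
    (hAB : μ⟦A ∩ B | m⟧ =ᵐ[μ] fun ω => (μ⟦A | m⟧) ω * d ω) :
    IntegrableOn (fun ω => (A ∩ B).indicator (fun _ => 1) ω / d ω) N μ ∧
      ∫ ω in N, (A ∩ B).indicator (fun _ => 1) ω / d ω ∂μ = μ.real (N ∩ A) := by
  have hlin := setLIntegral_ofReal_inter_indicator_div hm hN hA hB hd hd0 hAB
  have hF0 : 0 ≤ᵐ[μ.restrict N] fun ω => (A ∩ B).indicator (fun _ => (1 : ℝ)) ω / d ω :=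
    .of_forall fun ω => div_nonneg (Set.indicator_nonneg (fun _ _ => zero_le_one) ω) (hd0 ω).le
  have hFm : AEStronglyMeasurable (fun ω => (A ∩ B).indicator (fun _ => (1 : ℝ)) ω / d ω)
      (μ.restrict N) :=
    ((measurable_const.indicator (hA.inter hB)).div (hd.mono hm le_rfl)).aestronglyMeasurable
  refine ⟨⟨hFm, ?_⟩, ?_⟩
  · rw [hasFiniteIntegral_iff_ofReal hF0, hlin]
    exact measure_lt_top μ _
  · rw [integral_eq_lintegral_of_nonneg_ae hF0 hFm, hlin, measureReal_def]

theorem one_sub_ae_eq_condExp_compl [IsFiniteMeasure μ] (hm : m ≤ mΩ) {s : Set Ω} {e : Ω → ℝ}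
    (hs : MeasurableSet s) (he : e =ᵐ[μ] μ⟦s | m⟧) : (fun ω => 1 - e ω) =ᵐ[μ] μ⟦sᶜ | m⟧ := by
  rw [Set.indicator_compl]
  filter_upwards [condExp_sub (integrable_const (1 : ℝ)) ((integrable_const 1).indicator hs) m, he]
    with ω h he
  rw [h, Pi.sub_apply, condExp_const hm, he]

theorem integrableOn_indicator_div_and_setIntegral_eq [StandardBorelSpace Ω] [IsFiniteMeasure μ]
    {β : Type*} [MeasurableSpace β] {N : Set Ω} {d Z : Ω → ℝ} {T : Ω → β} {s : Set β}
    (hm : m ≤ mΩ) (hN : MeasurableSet[m] N) (hZ : Measurable Z) (hT : Measurable T)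
    (hs : MeasurableSet s) (hZv : ∀ ω, Z ω = 1 ∨ Z ω = -1) (hZT : CondIndepFun m hm Z T μ)
    (hd : Measurable[m] d) (hd0 : ∀ ω, 0 < d ω) (hdT : d =ᵐ[μ] μ⟦T ⁻¹' s | m⟧) :
    IntegrableOn (fun ω => (T ⁻¹' s).indicator Z ω / d ω) N μ ∧
      ∫ ω in N, (T ⁻¹' s).indicator Z ω / d ω ∂μ = ∫ ω in N, Z ω ∂μ := by
  have hA (a : ℝ) : MeasurableSet (Z ⁻¹' {a}) := hZ (measurableSet_singleton a)
  have hCI := (condIndepFun_iff_condExp_inter_preimage_eq_mul hZ hT).mp hZT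
  have ipw (a : ℝ) := integrableOn_inter_indicator_div_and_setIntegral_eq
    hm hN (hA a) (hT hs) hd hd0 (by
      filter_upwards [hCI _ _ (measurableSet_singleton a) hs, hdT] with ω h1 h2
      rw [h1, h2])
  obtain ⟨hint₁, heq₁⟩ := ipw 1
  obtain ⟨hint₂, heq₂⟩ := ipw (-1)
  have hsplit : (fun ω => (T ⁻¹' s).indicator Z ω / d ω) = fun ω =>
      (Z ⁻¹' {1} ∩ T ⁻¹' s).indicator (fun _ => 1) ω / d ω -
        (Z ⁻¹' {-1} ∩ T ⁻¹' s).indicator (fun _ => 1) ω / d ω := by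
    rw [indicator_eq_sub_of_eq_one_or_eq_neg_one hZv]
    ext ω
    exact sub_div _ _ _
  have hZsplit := indicator_eq_sub_of_eq_one_or_eq_neg_one hZv Set.univ
  simp only [Set.indicator_univ, Set.inter_univ] at hZsplit
  refine ⟨hsplit ▸ hint₁.sub hint₂, ?_⟩
  conv_rhs => rw [hZsplit]
  rw [hsplit, integral_sub hint₁ hint₂, heq₁, heq₂,
    integral_sub ((integrable_const (1 : ℝ)).indicator (hA 1)).restrict
      ((integrable_const (1 : ℝ)).indicator (hA (-1))).restrict,
    integral_indicator_const _ (hA 1), integral_indicator_const _ (hA (-1)),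
    measureReal_restrict_apply (hA 1), measureReal_restrict_apply (hA (-1))]
  simp only [smul_eq_mul, mul_one, Set.inter_comm]

end InversePropensityWeighting

theorem stmt_3_general {Ω : Type*} [MeasurableSpace Ω] [StandardBorelSpace Ω]
    (μ : Measure Ω) [IsProbabilityMeasure μ]
    {p : ℕ} (X : Ω → (Fin p → ℝ))
    (Yp Ym T : Ω → ℝ) (hYp : Measurable Yp) (hYm : Measurable Ym) (hT : Measurable T)
    (hYpv : ∀ ω, Yp ω = 1 ∨ Yp ω = -1) (hYmv : ∀ ω, Ym ω = 1 ∨ Ym ω = -1)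
    (hTv : ∀ ω, T ω = 1 ∨ T ω = -1)
    (mono : ∀ ω, Ym ω ≤ Yp ω)
    (hmX : MeasurableSpace.comap X inferInstance ≤ ‹MeasurableSpace Ω›)
    (unconf : CondIndepFun (MeasurableSpace.comap X inferInstance) hmX
      (fun ω => (Yp ω, Ym ω)) T μ)
    (eX : Ω → ℝ) (heXmeas : Measurable[MeasurableSpace.comap X inferInstance] eX)
    (heX : eX =ᵐ[μ] μ[{ω | T ω = 1}.indicator (fun _ => (1 : ℝ)) |
      MeasurableSpace.comap X inferInstance])
    (heXb : ∀ ω, 0 < eX ω ∧ eX ω < 1)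
    (Q : Ω → ℝ) (hQ : ∀ ω, Q ω = 1 / 2 + (eX ω - 1 / 2) * T ω)
    (Y : Ω → ℝ) (hY : ∀ ω, Y ω = if T ω = 1 then Yp ω else Ym ω)
    (f : (Fin p → ℝ) → ℝ) (hf : Measurable f) (hfv : ∀ x, f x = 1 ∨ f x = -1) :
    (μ {ω | f (X ω) = -1 ∧ Ym ω < Yp ω}).toReal
      = (1 / 4) * ∫ ω, (1 - f (X ω)) * (Y ω * T ω / Q ω) ∂μ := by
  set N : Set Ω := {ω | f (X ω) = -1}
  have hN : MeasurableSet[MeasurableSpace.comap X inferInstance] N :=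
    ⟨f ⁻¹' {-1}, hf (measurableSet_singleton _), rfl⟩
  have hcontrol : T ⁻¹' {-1} = (T ⁻¹' {1})ᶜ := by
    ext ω; rcases hTv ω with h | h <;> norm_num [h]
  obtain ⟨hint₁, heq₁⟩ := integrableOn_indicator_div_and_setIntegral_eq hmX hN hYp hT
    (measurableSet_singleton 1) hYpv (unconf.comp measurable_fst measurable_id) heXmeas
    (fun ω => (heXb ω).1) heX
  obtain ⟨hint₀, heq₀⟩ := integrableOn_indicator_div_and_setIntegral_eq hmX hN hYm hT
    (measurableSet_singleton (-1)) hYmv (unconf.comp measurable_snd measurable_id)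
    (d := fun ω => 1 - eX ω) (measurable_const.sub heXmeas) (fun ω => sub_pos.2 (heXb ω).2)
    (hcontrol ▸ one_sub_ae_eq_condExp_compl hmX (hT (measurableSet_singleton 1)) heX)
  have hintegrand (ω : Ω) : (1 - f (X ω)) * (Y ω * T ω / Q ω) = 2 * N.indicator (fun ω =>
      (T ⁻¹' {1}).indicator Yp ω / eX ω - (T ⁻¹' {-1}).indicator Ym ω / (1 - eX ω)) ω := by
    rw [mul_div_propensity_eq_sub hTv hQ hY]
    by_cases hω : ω ∈ N
    · rw [Set.indicator_of_mem hω, show f (X ω) = -1 from hω]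
      ring
    · rw [Set.indicator_of_notMem hω, (hfv (X ω)).resolve_right hω]
      ring
  calc (μ {ω | f (X ω) = -1 ∧ Ym ω < Yp ω}).toReal
      = μ.real (N ∩ {ω | Ym ω < Yp ω}) := rfl
    _ = 1 / 4 * (2 * (∫ ω in N, Yp ω ∂μ - ∫ ω in N, Ym ω ∂μ)) := by
        rw [setIntegral_sub_eq_two_mul_measureReal_lt hYp hYm hYpv hYmv mono]
        ring
    _ = 1 / 4 * ∫ ω, (1 - f (X ω)) * (Y ω * T ω / Q ω) ∂μ := by
        simp_rw [hintegrand]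
        rw [integral_const_mul, integral_indicator (hmX _ hN), integral_sub hint₁ hint₀, heq₁,
          heq₀]

/-- Under monotonicity and unconfoundedness, the false-negative probability satisfies
`P(f(X) = -1, R = +1) = (1/4)·E[(1 - f(X))·Y·T/Q]` for any measurable classifier `f`. -/
theorem stmt_3 {Ω : Type*} [MeasurableSpace Ω] [StandardBorelSpace Ω]
    (μ : Measure Ω) [IsProbabilityMeasure μ]
    {p : ℕ} (X : Ω → (Fin p → ℝ)) (hX : Measurable X)
    (Yp Ym T : Ω → ℝ) (hYp : Measurable Yp) (hYm : Measurable Ym) (hT : Measurable T)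
    (hYpv : ∀ ω, Yp ω = 1 ∨ Yp ω = -1) (hYmv : ∀ ω, Ym ω = 1 ∨ Ym ω = -1)
    (hTv : ∀ ω, T ω = 1 ∨ T ω = -1)
    (mono : ∀ ω, Ym ω ≤ Yp ω)
    (hmX : MeasurableSpace.comap X inferInstance ≤ ‹MeasurableSpace Ω›)
    (unconf : CondIndepFun (MeasurableSpace.comap X inferInstance) hmX
      (fun ω => (Yp ω, Ym ω)) T μ)
    (eX : Ω → ℝ) (heXmeas : Measurable[MeasurableSpace.comap X inferInstance] eX)
    (heX : eX =ᵐ[μ] μ[{ω | T ω = 1}.indicator (fun _ => (1 : ℝ)) |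
      MeasurableSpace.comap X inferInstance])
    (heXb : ∀ ω, 0 < eX ω ∧ eX ω < 1)
    (Q : Ω → ℝ) (hQ : ∀ ω, Q ω = 1 / 2 + (eX ω - 1 / 2) * T ω)
    (Y : Ω → ℝ) (hY : ∀ ω, Y ω = if T ω = 1 then Yp ω else Ym ω)
    (f : (Fin p → ℝ) → ℝ) (hf : Measurable f) (hfv : ∀ x, f x = 1 ∨ f x = -1) :
    (μ {ω | f (X ω) = -1 ∧ Ym ω < Yp ω}).toReal
      = (1 / 4) * ∫ ω, (1 - f (X ω)) * (Y ω * T ω / Q ω) ∂μ :=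
  stmt_3_general μ X Yp Ym T hYp hYm hT hYpv hYmv hTv mono hmX unconf eX heXmeas heX heXb Q hQ Y hY
    f hf hfv
end

section
/- Under monotonicity and unconfoundedness, for any θ ∈ [0,1] and any classifier f : ℝ^p → {-1,+1}, the weighted misclassification loss decomposes as L_θ(f) = (1/4)·E[f(X)·(2θ - Y·T/Q)] + (1/4)·E[2θ + (1-2θ)·Y·T/Q], where L_θ(f) = θ·P(f(X)=+1, R=-1) + (1-θ)·P(f(X)=-1, R=+1). -/
open MeasureTheory ProbabilityTheory

open scoped ENNReal

/-!
Inverse propensity weighting. Given `X`, the event `{T = 1}` has probability `e(X)` and is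
independent of the potential outcomes, so for every `X`-measurable weight `w` we get
`E[w · 1{T = 1} · Y(+1) / e(X)] = E[w · Y(+1)]`, and likewise with `1{T = -1}`, `Y(-1)` and
`1 - e(X)`. As `Y·T/Q = 1{T = 1} · Y(+1) / e(X) - 1{T = -1} · Y(-1) / (1 - e(X))`, the signal
`Y·T/Q` may be replaced by `Y(+1) - Y(-1)` in both expectations. By monotonicity
`Y(+1) - Y(-1) = 1 + R`, and the identity becomes a pointwise one in the four cases of `f(X)`, `R`.

The weight `1/e(X)` need not be bounded, so the weighting identity is proved first for Lebesgue
integrals of nonnegative functions, where pulling out an `X`-measurable factor needs no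
integrability; integrability of the weighted variables follows from the same identity.
-/

section

variable {Ω : Type*} {m m0 : MeasurableSpace Ω} {μ : Measure Ω}

theorem ae_norm_le_one_of_eq_one_or_eq_neg_one {Z : Ω → ℝ} (hZv : ∀ ω, Z ω = 1 ∨ Z ω = -1) :
    ∀ᵐ ω ∂μ, ‖Z ω‖ ≤ 1 :=
  ae_of_all μ fun ω => by rcases hZv ω with h | h <;> simp [h]

theorem lintegral_condLExp_mul (hm : m ≤ m0) [SigmaFinite (μ.trim hm)] {X : Ω → ℝ≥0∞}
    (hX : Measurable X) {g : Ω → ℝ≥0∞} (hg : Measurable[m] g) :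
    ∫⁻ ω, μ⁻[X|m] ω * g ω ∂μ = ∫⁻ ω, X ω * g ω ∂μ := by
  have htrim : (μ.withDensity μ⁻[X|m]).trim hm = (μ.withDensity X).trim hm := by
    refine @Measure.ext Ω m _ _ fun s hs => ?_
    rw [trim_measurableSet_eq hm hs, trim_measurableSet_eq hm hs, withDensity_apply _ (hm s hs),
      withDensity_apply _ (hm s hs), setLIntegral_condLExp hm μ X hs]
  have h_cond := lintegral_withDensity_eq_lintegral_mul μ
    ((measurable_condLExp m μ X).mono hm le_rfl) (hg.mono hm le_rfl)
  have h_X := lintegral_withDensity_eq_lintegral_mul μ hX (hg.mono hm le_rfl)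
  simp only [Pi.mul_apply] at h_cond h_X
  rw [← h_cond, ← h_X, ← lintegral_trim hm hg, ← lintegral_trim hm hg, htrim]

theorem setLIntegral_eq_lintegral_condExp_mul (hm : m ≤ m0) [IsFiniteMeasure μ] {D : Set Ω}
    (hD : MeasurableSet D) {g : Ω → ℝ≥0∞} (hg : Measurable[m] g) :
    ∫⁻ ω in D, g ω ∂μ = ∫⁻ ω, ENNReal.ofReal ((μ⟦D | m⟧) ω) * g ω ∂μ := by
  have h_ind : (fun ω => ENNReal.ofReal (D.indicator (fun _ => (1 : ℝ)) ω)) = D.indicator 1 := by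
    funext ω
    by_cases h : ω ∈ D <;> simp [h]
  have h_cond := condLExp_ofReal m ((integrable_const (1 : ℝ)).indicator hD (μ := μ))
    (ae_of_all μ (Set.indicator_nonneg fun _ _ => zero_le_one))
  rw [h_ind] at h_cond
  calc ∫⁻ ω in D, g ω ∂μ = ∫⁻ ω, D.indicator 1 ω * g ω ∂μ := by
        rw [← lintegral_indicator hD]
        congr 1
        funext ω
        by_cases h : ω ∈ D <;> simp [h]
    _ = ∫⁻ ω, μ⁻[D.indicator 1|m] ω * g ω ∂μ :=
        (lintegral_condLExp_mul hm (measurable_one.indicator hD) hg).symm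
    _ = _ := lintegral_congr_ae (h_cond.mono fun ω h => congrArg (· * g ω) h)

theorem condExp_indicator_compl_ae_eq (hm : m ≤ m0) [IsFiniteMeasure μ] {B : Set Ω}
    (hB : MeasurableSet B) : μ⟦Bᶜ | m⟧ =ᵐ[μ] fun ω => 1 - (μ⟦B | m⟧) ω := by
  rw [Set.indicator_compl]
  filter_upwards [condExp_sub (integrable_const (1 : ℝ))
    ((integrable_const (1 : ℝ)).indicator hB (μ := μ)) m] with ω h
  rw [h, Pi.sub_apply, condExp_const hm]

structure IsPropensityScore (m : MeasurableSpace Ω) (μ : Measure[m0] Ω) (B : Set Ω)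
    (e : Ω → ℝ) : Prop where
  measurable : Measurable[m] e
  pos : ∀ ω, 0 < e ω
  ae_eq_condExp : e =ᵐ[μ] μ⟦B | m⟧

theorem IsPropensityScore.compl (hm : m ≤ m0) [IsFiniteMeasure μ] {B : Set Ω} {e : Ω → ℝ}
    (he : IsPropensityScore m μ B e) (hB : MeasurableSet B) (he_lt : ∀ ω, e ω < 1) :
    IsPropensityScore m μ Bᶜ fun ω => 1 - e ω where
  measurable := measurable_const.sub he.measurable
  pos ω := sub_pos.2 (he_lt ω)
  ae_eq_condExp := by
    filter_upwards [he.ae_eq_condExp, condExp_indicator_compl_ae_eq hm hB (μ := μ)] with ω h hc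
    rw [hc, h]

variable [StandardBorelSpace Ω] [IsFiniteMeasure μ] {A B : Set Ω} {e : Ω → ℝ}

theorem setLIntegral_inter_div_eq (hm : m ≤ m0) (hA : MeasurableSet A) (hB : MeasurableSet B)
    (hAB : CondIndepSet m hm A B μ) (he : IsPropensityScore m μ B e) {g : Ω → ℝ≥0∞}
    (hg : Measurable[m] g) :
    ∫⁻ ω in A ∩ B, g ω / ENNReal.ofReal (e ω) ∂μ = ∫⁻ ω in A, g ω ∂μ := by
  have hg_div : Measurable[m] fun ω => g ω / ENNReal.ofReal (e ω) :=
    hg.div (ENNReal.measurable_ofReal.comp he.measurable)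
  rw [setLIntegral_eq_lintegral_condExp_mul hm (hA.inter hB) hg_div,
    setLIntegral_eq_lintegral_condExp_mul hm hA hg]
  refine lintegral_congr_ae ?_
  filter_upwards [(condIndepSet_iff m hm A B hA hB μ).1 hAB, he.ae_eq_condExp,
    condExp_nonneg (m := m) (f := A.indicator fun _ => (1 : ℝ))
      (ae_of_all μ (Set.indicator_nonneg fun _ _ => zero_le_one))]
    with ω h_inter h_e h_nonneg
  have he_ne : ENNReal.ofReal (e ω) ≠ 0 := by simpa using he.pos ω
  rw [h_inter, Pi.mul_apply, ← h_e, ENNReal.ofReal_mul h_nonneg, mul_assoc,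
    ENNReal.mul_div_cancel he_ne ENNReal.ofReal_ne_top]

theorem setLIntegral_ofReal_inter_div_eq (hm : m ≤ m0) (hA : MeasurableSet A)
    (hB : MeasurableSet B) (hAB : CondIndepSet m hm A B μ) (he : IsPropensityScore m μ B e)
    {w : Ω → ℝ} (hw : Measurable[m] w) :
    ∫⁻ ω in A ∩ B, ENNReal.ofReal (w ω / e ω) ∂μ = ∫⁻ ω in A, ENNReal.ofReal (w ω) ∂μ := by
  simp_rw [ENNReal.ofReal_div_of_pos (he.pos _)]
  exact setLIntegral_inter_div_eq hm hA hB hAB he (ENNReal.measurable_ofReal.comp hw)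

theorem integrableOn_inter_div (hm : m ≤ m0) (hA : MeasurableSet A) (hB : MeasurableSet B)
    (hAB : CondIndepSet m hm A B μ) (he : IsPropensityScore m μ B e) {w : Ω → ℝ}
    (hw : Measurable[m] w) (hwi : IntegrableOn w A μ) :
    IntegrableOn (fun ω => w ω / e ω) (A ∩ B) μ := by
  refine ⟨((hw.div he.measurable).mono hm le_rfl).aestronglyMeasurable, ?_⟩
  rw [hasFiniteIntegral_iff_norm]
  have h_norm : ∀ ω, ‖w ω / e ω‖ = |w ω| / e ω := fun ω => by
    rw [Real.norm_eq_abs, abs_div, abs_of_pos (he.pos ω)]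
  simp_rw [h_norm, setLIntegral_ofReal_inter_div_eq hm hA hB hAB he (w := fun ω => |w ω|)
    (continuous_abs.measurable.comp hw)]
  simpa [hasFiniteIntegral_iff_norm] using hwi.hasFiniteIntegral

theorem setIntegral_inter_div_eq (hm : m ≤ m0) (hA : MeasurableSet A) (hB : MeasurableSet B)
    (hAB : CondIndepSet m hm A B μ) (he : IsPropensityScore m μ B e) {w : Ω → ℝ}
    (hw : Measurable[m] w) (hwi : IntegrableOn w A μ) :
    ∫ ω in A ∩ B, w ω / e ω ∂μ = ∫ ω in A, w ω ∂μ := by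
  rw [integral_eq_lintegral_pos_part_sub_lintegral_neg_part
      (integrableOn_inter_div hm hA hB hAB he hw hwi),
    integral_eq_lintegral_pos_part_sub_lintegral_neg_part hwi]
  simp_rw [← neg_div]
  rw [setLIntegral_ofReal_inter_div_eq hm hA hB hAB he hw,
    setLIntegral_ofReal_inter_div_eq hm hA hB hAB he (w := fun ω => -w ω)
      (measurable_neg.comp hw)]

theorem integrable_mul_indicator_div_and_integral_eq (hm : m ≤ m0) (hB : MeasurableSet B)
    (he : IsPropensityScore m μ B e) {Z : Ω → ℝ} (hZ : Measurable Z)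
    (hZv : ∀ ω, Z ω = 1 ∨ Z ω = -1)
    (hZB : ∀ s, MeasurableSet s → CondIndepSet m hm (Z ⁻¹' s) B μ)
    {w : Ω → ℝ} (hw : Measurable[m] w) (hwi : Integrable w μ) :
    Integrable (fun ω => w ω * (B.indicator Z ω / e ω)) μ ∧
      ∫ ω, w ω * (B.indicator Z ω / e ω) ∂μ = ∫ ω, w ω * Z ω ∂μ := by
  set P := Z ⁻¹' {1}
  set N := Z ⁻¹' {-1}
  have hP : MeasurableSet P := hZ (measurableSet_singleton 1)
  have hN : MeasurableSet N := hZ (measurableSet_singleton (-1))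
  have h_split : ∀ ω, w ω * (B.indicator Z ω / e ω)
      = (P ∩ B).indicator (fun ω => w ω / e ω) ω - (N ∩ B).indicator (fun ω => w ω / e ω) ω := by
    intro ω
    by_cases hωB : ω ∈ B <;> rcases hZv ω with hωZ | hωZ <;>
      norm_num [P, N, Set.indicator_apply, hωB, hωZ, div_eq_mul_inv]
  have h_splitZ : ∀ ω, w ω * Z ω = P.indicator w ω - N.indicator w ω := by
    intro ω
    rcases hZv ω with hωZ | hωZ <;> norm_num [P, N, Set.indicator_apply, hωZ]
  have hPB := hZB _ (measurableSet_singleton 1)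
  have hNB := hZB _ (measurableSet_singleton (-1))
  have hPi := (integrableOn_inter_div hm hP hB hPB he hw hwi.integrableOn).integrable_indicator
    (hP.inter hB)
  have hNi := (integrableOn_inter_div hm hN hB hNB he hw hwi.integrableOn).integrable_indicator
    (hN.inter hB)
  simp only [h_split, h_splitZ]
  refine ⟨hPi.sub hNi, ?_⟩
  rw [integral_sub hPi hNi, integral_sub (hwi.indicator hP) (hwi.indicator hN),
    integral_indicator (hP.inter hB), integral_indicator (hN.inter hB), integral_indicator hP,
    integral_indicator hN, setIntegral_inter_div_eq hm hP hB hPB he hw hwi.integrableOn,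
    setIntegral_inter_div_eq hm hN hB hNB he hw hwi.integrableOn]

theorem integrable_mul_ipw_and_integral_eq (hm : m ≤ m0) {Yp Ym T : Ω → ℝ} (hYp : Measurable Yp)
    (hYm : Measurable Ym) (hT : Measurable T) (hYpv : ∀ ω, Yp ω = 1 ∨ Yp ω = -1)
    (hYmv : ∀ ω, Ym ω = 1 ∨ Ym ω = -1) (hTv : ∀ ω, T ω = 1 ∨ T ω = -1)
    (unconf : CondIndepFun m hm (fun ω => (Yp ω, Ym ω)) T μ)
    (he : IsPropensityScore m μ {ω | T ω = 1} e) (he_lt : ∀ ω, e ω < 1) {Q Y : Ω → ℝ}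
    (hQ : ∀ ω, Q ω = 1 / 2 + (e ω - 1 / 2) * T ω)
    (hY : ∀ ω, Y ω = if T ω = 1 then Yp ω else Ym ω)
    {w : Ω → ℝ} (hw : Measurable[m] w) (hwi : Integrable w μ) :
    Integrable (fun ω => w ω * (Y ω * T ω / Q ω)) μ ∧
      Integrable (fun ω => w ω * (Yp ω - Ym ω)) μ ∧
      ∫ ω, w ω * (Y ω * T ω / Q ω) ∂μ = ∫ ω, w ω * (Yp ω - Ym ω) ∂μ := by
  set B := {ω | T ω = 1}
  have hB : MeasurableSet B := hT (measurableSet_singleton 1)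
  have h_indep := (condIndepFun_iff_condIndepSet_preimage (hYp.prodMk hYm) hT).1 unconf
  have h_weight : ∀ ω,
      Y ω * T ω / Q ω = B.indicator Yp ω / e ω - Bᶜ.indicator Ym ω / (1 - e ω) := by
    intro ω
    rcases hTv ω with hω | hω <;> norm_num [B, hY, hQ, hω]
    ring
  obtain ⟨h_treated_int, h_treated⟩ := integrable_mul_indicator_div_and_integral_eq hm hB he hYp
    hYpv (fun s hs => h_indep _ _ (measurable_fst hs) (measurableSet_singleton 1)) hw hwi
  obtain ⟨h_control_int, h_control⟩ := integrable_mul_indicator_div_and_integral_eq hm hB.compl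
    (he.compl hm hB he_lt) hYm hYmv
    (fun s hs => h_indep _ _ (measurable_snd hs) (measurableSet_singleton 1).compl) hw hwi
  have hYp_int : Integrable (fun ω => w ω * Yp ω) μ :=
    hwi.mul_bdd hYp.aestronglyMeasurable (ae_norm_le_one_of_eq_one_or_eq_neg_one hYpv)
  have hYm_int : Integrable (fun ω => w ω * Ym ω) μ :=
    hwi.mul_bdd hYm.aestronglyMeasurable (ae_norm_le_one_of_eq_one_or_eq_neg_one hYmv)
  simp only [h_weight, mul_sub]
  refine ⟨h_treated_int.sub h_control_int, hYp_int.sub hYm_int, ?_⟩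
  rw [integral_sub h_treated_int h_control_int, integral_sub hYp_int hYm_int, h_treated,
    h_control]

end

theorem loss_integrand_eq_ite (θ f a b : ℝ) (hf : f = 1 ∨ f = -1) (ha : a = 1 ∨ a = -1)
    (hb : b = 1 ∨ b = -1) (hab : b ≤ a) :
    1 / 4 * (f * (2 * θ - (a - b))) + 1 / 4 * (2 * θ + (1 - 2 * θ) * (a - b))
      = θ * (if f = 1 ∧ ¬ b < a then 1 else 0) + (1 - θ) * (if f = -1 ∧ b < a then 1 else 0) := by
  rcases ha with rfl | rfl <;> rcases hb with rfl | rfl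
  · rcases hf with rfl | rfl <;> norm_num
    ring
  · rcases hf with rfl | rfl <;> norm_num <;> ring
  · norm_num at hab
  · rcases hf with rfl | rfl <;> norm_num
    ring

theorem weighted_loss_eq_integral_potential_outcomes {Ω : Type*} [MeasurableSpace Ω]
    {μ : Measure Ω} [IsFiniteMeasure μ] {F Yp Ym : Ω → ℝ} (hF : Measurable F) (hYp : Measurable Yp)
    (hYm : Measurable Ym) (hFv : ∀ ω, F ω = 1 ∨ F ω = -1) (hYpv : ∀ ω, Yp ω = 1 ∨ Yp ω = -1)
    (hYmv : ∀ ω, Ym ω = 1 ∨ Ym ω = -1) (mono : ∀ ω, Ym ω ≤ Yp ω) (θ : ℝ) :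
    θ * (μ {ω | F ω = 1 ∧ ¬ Ym ω < Yp ω}).toReal
        + (1 - θ) * (μ {ω | F ω = -1 ∧ Ym ω < Yp ω}).toReal
      = 1 / 4 * ∫ ω, F ω * (2 * θ - (Yp ω - Ym ω)) ∂μ
        + 1 / 4 * ∫ ω, 2 * θ + (1 - 2 * θ) * (Yp ω - Ym ω) ∂μ := by
  set S₁ := {ω | F ω = 1 ∧ ¬ Ym ω < Yp ω}
  set S₂ := {ω | F ω = -1 ∧ Ym ω < Yp ω}
  have hS₁ : MeasurableSet S₁ :=
    (hF (measurableSet_singleton 1)).inter (measurableSet_lt hYm hYp).compl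
  have hS₂ : MeasurableSet S₂ :=
    (hF (measurableSet_singleton (-1))).inter (measurableSet_lt hYm hYp)
  have h_pt : ∀ ω, 1 / 4 * (F ω * (2 * θ - (Yp ω - Ym ω)))
      + 1 / 4 * (2 * θ + (1 - 2 * θ) * (Yp ω - Ym ω))
      = θ * S₁.indicator 1 ω + (1 - θ) * S₂.indicator 1 ω := by
    intro ω
    simp only [Set.indicator_apply, Pi.one_apply, S₁, S₂]
    exact loss_integrand_eq_ite θ _ _ _ (hFv ω) (hYpv ω) (hYmv ω) (mono ω)
  have hD : Integrable (fun ω => Yp ω - Ym ω) μ :=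
    (Integrable.of_bound hYp.aestronglyMeasurable 1
      (ae_norm_le_one_of_eq_one_or_eq_neg_one hYpv)).sub
    (Integrable.of_bound hYm.aestronglyMeasurable 1
      (ae_norm_le_one_of_eq_one_or_eq_neg_one hYmv))
  have h₁ : Integrable (fun ω => F ω * (2 * θ - (Yp ω - Ym ω))) μ :=
    ((integrable_const _).sub hD).bdd_mul hF.aestronglyMeasurable
      (ae_norm_le_one_of_eq_one_or_eq_neg_one hFv)
  have h₂ : Integrable (fun ω => 2 * θ + (1 - 2 * θ) * (Yp ω - Ym ω)) μ :=
    (integrable_const _).add (hD.const_mul _)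
  rw [← integral_const_mul, ← integral_const_mul, ← integral_add (h₁.const_mul _) (h₂.const_mul _)]
  simp_rw [h_pt]
  rw [integral_add (((integrable_const 1).indicator hS₁).const_mul _)
    (((integrable_const 1).indicator hS₂).const_mul _), integral_const_mul, integral_const_mul,
    integral_indicator_one hS₁, integral_indicator_one hS₂]
  rfl

theorem stmt_5_general {Ω : Type*} [MeasurableSpace Ω] [StandardBorelSpace Ω]
    (μ : Measure Ω) [IsProbabilityMeasure μ]
    {p : ℕ} (X : Ω → (Fin p → ℝ))
    (Yp Ym T : Ω → ℝ) (hYp : Measurable Yp) (hYm : Measurable Ym) (hT : Measurable T)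
    (hYpv : ∀ ω, Yp ω = 1 ∨ Yp ω = -1) (hYmv : ∀ ω, Ym ω = 1 ∨ Ym ω = -1)
    (hTv : ∀ ω, T ω = 1 ∨ T ω = -1)
    (mono : ∀ ω, Ym ω ≤ Yp ω)
    (hmX : MeasurableSpace.comap X inferInstance ≤ ‹MeasurableSpace Ω›)
    (unconf : CondIndepFun (MeasurableSpace.comap X inferInstance) hmX
      (fun ω => (Yp ω, Ym ω)) T μ)
    (eX : Ω → ℝ) (heXmeas : Measurable[MeasurableSpace.comap X inferInstance] eX)
    (heX : eX =ᵐ[μ] μ[{ω | T ω = 1}.indicator (fun _ => (1 : ℝ)) |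
      MeasurableSpace.comap X inferInstance])
    (heXb : ∀ ω, 0 < eX ω ∧ eX ω < 1)
    (Q : Ω → ℝ) (hQ : ∀ ω, Q ω = 1 / 2 + (eX ω - 1 / 2) * T ω)
    (Y : Ω → ℝ) (hY : ∀ ω, Y ω = if T ω = 1 then Yp ω else Ym ω)
    (f : (Fin p → ℝ) → ℝ) (hf : Measurable f) (hfv : ∀ x, f x = 1 ∨ f x = -1)
    (θ : ℝ) :
    θ * (μ {ω | f (X ω) = 1 ∧ ¬ Ym ω < Yp ω}).toReal
        + (1 - θ) * (μ {ω | f (X ω) = -1 ∧ Ym ω < Yp ω}).toReal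
      = (1 / 4) * (∫ ω, f (X ω) * (2 * θ - Y ω * T ω / Q ω) ∂μ)
        + (1 / 4) * (∫ ω, 2 * θ + (1 - 2 * θ) * (Y ω * T ω / Q ω) ∂μ) := by
  have hF : Measurable[MeasurableSpace.comap X inferInstance] fun ω => f (X ω) :=
    hf.comp (comap_measurable X)
  have hFi : Integrable (fun ω => f (X ω)) μ := Integrable.of_bound
    (hF.mono hmX le_rfl).aestronglyMeasurable 1
    (ae_norm_le_one_of_eq_one_or_eq_neg_one fun ω => hfv (X ω))
  have he : IsPropensityScore _ μ {ω | T ω = 1} eX := ⟨heXmeas, fun ω => (heXb ω).1, heX⟩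
  have ipw := fun {w : Ω → ℝ} => integrable_mul_ipw_and_integral_eq hmX hYp hYm hT hYpv hYmv
    hTv unconf he (fun ω => (heXb ω).2) hQ hY (w := w)
  obtain ⟨hFG, hFD, hF_eq⟩ := ipw hF hFi
  obtain ⟨hcG, hcD, hc_eq⟩ := ipw (w := fun _ => 1 - 2 * θ) measurable_const (integrable_const _)
  rw [weighted_loss_eq_integral_potential_outcomes (hF.mono hmX le_rfl) hYp hYm
    (fun ω => hfv (X ω)) hYpv hYmv mono]
  congr 2
  · simp only [mul_sub (f (X _)) (2 * θ)]
    rw [integral_sub (hFi.mul_const _) hFD, integral_sub (hFi.mul_const _) hFG, hF_eq]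
  · rw [integral_add (integrable_const _) hcD, integral_add (integrable_const _) hcG, hc_eq]

/-- Under monotonicity and unconfoundedness, for any `θ ∈ [0,1]` and classifier `f`, the weighted
misclassification loss decomposes as
`L_θ(f) = (1/4)·E[f(X)·(2θ - Y·T/Q)] + (1/4)·E[2θ + (1-2θ)·Y·T/Q]`, where
`L_θ(f) = θ·P(f(X)=+1, R=-1) + (1-θ)·P(f(X)=-1, R=+1)`. -/
theorem stmt_5 {Ω : Type*} [MeasurableSpace Ω] [StandardBorelSpace Ω]
    (μ : Measure Ω) [IsProbabilityMeasure μ]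
    {p : ℕ} (X : Ω → (Fin p → ℝ)) (hX : Measurable X)
    (Yp Ym T : Ω → ℝ) (hYp : Measurable Yp) (hYm : Measurable Ym) (hT : Measurable T)
    (hYpv : ∀ ω, Yp ω = 1 ∨ Yp ω = -1) (hYmv : ∀ ω, Ym ω = 1 ∨ Ym ω = -1)
    (hTv : ∀ ω, T ω = 1 ∨ T ω = -1)
    (mono : ∀ ω, Ym ω ≤ Yp ω)
    (hmX : MeasurableSpace.comap X inferInstance ≤ ‹MeasurableSpace Ω›)
    (unconf : CondIndepFun (MeasurableSpace.comap X inferInstance) hmX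
      (fun ω => (Yp ω, Ym ω)) T μ)
    (eX : Ω → ℝ) (heXmeas : Measurable[MeasurableSpace.comap X inferInstance] eX)
    (heX : eX =ᵐ[μ] μ[{ω | T ω = 1}.indicator (fun _ => (1 : ℝ)) |
      MeasurableSpace.comap X inferInstance])
    (heXb : ∀ ω, 0 < eX ω ∧ eX ω < 1)
    (Q : Ω → ℝ) (hQ : ∀ ω, Q ω = 1 / 2 + (eX ω - 1 / 2) * T ω)
    (Y : Ω → ℝ) (hY : ∀ ω, Y ω = if T ω = 1 then Yp ω else Ym ω)
    (f : (Fin p → ℝ) → ℝ) (hf : Measurable f) (hfv : ∀ x, f x = 1 ∨ f x = -1)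
    (θ : ℝ) (hθ : 0 ≤ θ ∧ θ ≤ 1) :
    θ * (μ {ω | f (X ω) = 1 ∧ ¬ Ym ω < Yp ω}).toReal
        + (1 - θ) * (μ {ω | f (X ω) = -1 ∧ Ym ω < Yp ω}).toReal
      = (1 / 4) * (∫ ω, f (X ω) * (2 * θ - Y ω * T ω / Q ω) ∂μ)
        + (1 / 4) * (∫ ω, 2 * θ + (1 - 2 * θ) * (Y ω * T ω / Q ω) ∂μ) :=
  stmt_5_general μ X Yp Ym T hYp hYm hT hYpv hYmv hTv mono hmX unconf eX heXmeas heX heXb Q hQ Y hY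
    f hf hfv θ
end

section
/- Under monotonicity, unconfoundedness, and Q = 1/2, the observable label Z = YT satisfies P(Z = z | X) = (1 + z·ρ(X))/2 for z ∈ {-1,+1}, where ρ(X) = P(R = +1 | X). -/
/-!
Conditionally on `(X, Y(+1), Y(-1))` the treatment is a fair coin, so `Z = z` has conditional
probability `(1{Y(+1) = z} + 1{Y(-1) = -z}) / 2`. For binary monotone outcomes the numerator is
`1 + z · 1{R = +1}`, and conditioning further down to `X` turns that indicator into `ρ(X)`.
-/

open MeasureTheory

section CondExp

variable {Ω : Type*} {m mΩ : MeasurableSpace Ω} {μ : Measure Ω} [IsFiniteMeasure μ]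

theorem condExp_piecewise (hm : m ≤ mΩ) {s : Set Ω} [DecidablePred (· ∈ s)] (hs : MeasurableSet s)
    {f g : Ω → ℝ} (hf : StronglyMeasurable[m] f) (hg : StronglyMeasurable[m] g)
    (hfi : Integrable f μ) (hgi : Integrable g μ) :
    μ[s.piecewise f g | m] =ᵐ[μ]
      f * μ[s.indicator (fun _ => 1) | m] + g * (1 - μ[s.indicator (fun _ => 1) | m]) := by
  have hsplit : s.piecewise f g = (f - g) * s.indicator (fun _ => 1) + g := by
    ext ω
    by_cases hω : ω ∈ s <;> simp [hω]
  have hprod : Integrable ((f - g) * s.indicator (fun _ => 1)) μ := by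
    have hind : (f - g) * s.indicator (fun _ => 1) = s.indicator (f - g) := by
      ext ω
      by_cases hω : ω ∈ s <;> simp [hω]
    exact hind ▸ (hfi.sub hgi).indicator hs
  have hpull := condExp_mul_of_stronglyMeasurable_left (hf.sub hg) hprod
    ((integrable_const (1 : ℝ)).indicator hs)
  rw [hsplit]
  filter_upwards [condExp_add hprod hgi m, hpull] with ω hadd hmul
  simp only [hadd, hmul, condExp_of_stronglyMeasurable hm hg hgi, Pi.add_apply, Pi.mul_apply,
    Pi.sub_apply, Pi.one_apply]
  ring

theorem condExp_const_add_const_mul (hm : m ≤ mΩ) {f : Ω → ℝ} (hf : Integrable f μ) (a b : ℝ) :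
    μ[fun ω => a + b * f ω | m] =ᵐ[μ] fun ω => a + b * μ[f | m] ω := by
  have hsum : (fun ω => a + b * f ω) = (fun _ => a) + b • f := rfl
  rw [hsum]
  filter_upwards [condExp_add (integrable_const a) (hf.smul b) m, condExp_smul b f m]
    with ω hadd hsmul
  simp only [hadd, hsmul, condExp_const hm, Pi.add_apply, Pi.smul_apply, smul_eq_mul]

end CondExp

section PotentialOutcomes

variable {Ω : Type*} {Yp Ym T Y : Ω → ℝ} {z : ℝ}

theorem indicator_mul_treatment_eq_piecewise [DecidablePred (· ∈ {ω | T ω = 1})]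
    (hTv : ∀ ω, T ω = 1 ∨ T ω = -1) (hY : ∀ ω, Y ω = if T ω = 1 then Yp ω else Ym ω) :
    {ω | Y ω * T ω = z}.indicator (fun _ => (1 : ℝ)) =
      {ω | T ω = 1}.piecewise ({ω | Yp ω = z}.indicator fun _ => 1)
        ({ω | Ym ω = -z}.indicator fun _ => 1) := by
  ext ω
  rcases hTv ω with hT | hT <;>
    norm_num [Set.indicator_apply, Set.piecewise, hY ω, hT, neg_eq_iff_eq_neg]

theorem indicator_eq_add_indicator_eq_neg (hYpv : ∀ ω, Yp ω = 1 ∨ Yp ω = -1)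
    (hYmv : ∀ ω, Ym ω = 1 ∨ Ym ω = -1) (mono : ∀ ω, Ym ω ≤ Yp ω) (hz : z = 1 ∨ z = -1) (ω : Ω) :
    {ω | Yp ω = z}.indicator (fun _ => (1 : ℝ)) ω + {ω | Ym ω = -z}.indicator (fun _ => 1) ω =
      1 + z * {ω | Ym ω < Yp ω}.indicator (fun _ => 1) ω := by
  simp only [Set.indicator_apply, Set.mem_ofPred_eq]
  rcases hYpv ω with hp | hp <;> rcases hYmv ω with hq | hq
  case inr.inl => linarith [mono ω]
  all_goals rcases hz with rfl | rfl <;> norm_num [hp, hq]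

theorem condExp_indicator_mul_treatment {m mΩ : MeasurableSpace Ω} {μ : Measure Ω}
    [IsFiniteMeasure μ] (hm : m ≤ mΩ) (hYp : Measurable[m] Yp) (hYm : Measurable[m] Ym)
    (hT : Measurable T) (hYpv : ∀ ω, Yp ω = 1 ∨ Yp ω = -1) (hYmv : ∀ ω, Ym ω = 1 ∨ Ym ω = -1)
    (hTv : ∀ ω, T ω = 1 ∨ T ω = -1) (mono : ∀ ω, Ym ω ≤ Yp ω)
    (hT12 : μ[{ω | T ω = 1}.indicator (fun _ => (1 : ℝ)) | m] =ᵐ[μ] fun _ => 1 / 2)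
    (hY : ∀ ω, Y ω = if T ω = 1 then Yp ω else Ym ω) (hz : z = 1 ∨ z = -1) :
    μ[{ω | Y ω * T ω = z}.indicator (fun _ => (1 : ℝ)) | m]
      =ᵐ[μ] fun ω => 1 / 2 + z / 2 * {ω | Ym ω < Yp ω}.indicator (fun _ => 1) ω := by
  classical
  have hYps : MeasurableSet[m] {ω | Yp ω = z} := hYp (measurableSet_singleton z)
  have hYms : MeasurableSet[m] {ω | Ym ω = -z} := hYm (measurableSet_singleton (-z))
  have hTs : MeasurableSet {ω | T ω = 1} := hT (measurableSet_singleton 1)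
  rw [indicator_mul_treatment_eq_piecewise hTv hY]
  filter_upwards [condExp_piecewise hm hTs
    (stronglyMeasurable_const.indicator hYps) (stronglyMeasurable_const.indicator hYms)
    ((integrable_const 1).indicator (hm _ hYps)) ((integrable_const 1).indicator (hm _ hYms)),
    hT12] with ω hpiece hhalf
  have hsum := indicator_eq_add_indicator_eq_neg hYpv hYmv mono hz ω
  simp only [hpiece, hhalf, Pi.add_apply, Pi.mul_apply, Pi.sub_apply, Pi.one_apply]
  linarith

end PotentialOutcomes

/-- Under monotonicity, unconfoundedness and equiprobable treatment (`Q = 1/2`), the observable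
label `Z = YT` satisfies `P(Z = z | X) = (1 + z·ρ(X))/2` for `z ∈ {-1,+1}`,
where `ρ(X) = P(R = +1 | X)`. -/
theorem stmt_11 {Ω : Type*} [MeasurableSpace Ω] (μ : Measure Ω) [IsProbabilityMeasure μ]
    {p : ℕ} (X : Ω → (Fin p → ℝ)) (hX : Measurable X)
    (Yp Ym T : Ω → ℝ) (hYp : Measurable Yp) (hYm : Measurable Ym) (hT : Measurable T)
    (hYpv : ∀ ω, Yp ω = 1 ∨ Yp ω = -1) (hYmv : ∀ ω, Ym ω = 1 ∨ Ym ω = -1)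
    (hTv : ∀ ω, T ω = 1 ∨ T ω = -1)
    (mono : ∀ ω, Ym ω ≤ Yp ω)
    (hT12 : μ[{ω | T ω = 1}.indicator (fun _ => (1 : ℝ)) |
        MeasurableSpace.comap (fun ω => (X ω, Yp ω, Ym ω)) inferInstance]
      =ᵐ[μ] fun _ => 1 / 2)
    (Y : Ω → ℝ) (hY : ∀ ω, Y ω = if T ω = 1 then Yp ω else Ym ω) :
    ∀ z : ℝ, z = 1 ∨ z = -1 →
      μ[{ω | Y ω * T ω = z}.indicator (fun _ => (1 : ℝ)) |
          MeasurableSpace.comap X inferInstance]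
        =ᵐ[μ] fun ω =>
          (1 + z * (μ[{ω | Ym ω < Yp ω}.indicator (fun _ => (1 : ℝ)) |
            MeasurableSpace.comap X inferInstance]) ω) / 2 := by
  intro z hz
  set W := fun ω => (X ω, Yp ω, Ym ω)
  have hW : Measurable W := hX.prodMk (hYp.prodMk hYm)
  have hXW : MeasurableSpace.comap X inferInstance ≤ MeasurableSpace.comap W inferInstance :=
    (measurable_fst.comp (comap_measurable W)).comap_le
  have hZW := condExp_indicator_mul_treatment hW.comap_le
    ((measurable_fst.comp measurable_snd).comp (comap_measurable W))
    ((measurable_snd.comp measurable_snd).comp (comap_measurable W))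
    hT hYpv hYmv hTv mono hT12 hY hz
  calc _ =ᵐ[μ] μ[μ[{ω | Y ω * T ω = z}.indicator (fun _ => (1 : ℝ)) |
          MeasurableSpace.comap W inferInstance] | MeasurableSpace.comap X inferInstance] :=
        (condExp_condExp_of_le hXW hW.comap_le).symm
    _ =ᵐ[μ] _ := condExp_congr_ae hZW
    _ =ᵐ[μ] _ := condExp_const_add_const_mul hX.comap_le
        ((integrable_const 1).indicator (measurableSet_lt hYm hYp)) _ _
    _ = _ := by ext ω; ring
end

section
/- If Q = 1/2 and monotonicity holds, then E[Z | X] = ρ(X) and hence E[Z] = P(R = +1); i.e., the mean of the observable label YT equals the responder rate. -/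
/-!
Since `T = ±1`, the observed label is `Y T = (Y(+1) + Y(-1)) 𝟙{T = 1} - Y(-1)`. Conditioning on
`(X, Y(+1), Y(-1))` pulls out the potential outcomes and replaces `𝟙{T = 1}` by `1/2`, leaving
`(Y(+1) - Y(-1)) / 2`, which for monotone `±1`-valued outcomes is exactly `𝟙{R = +1}`. The tower
property passes this down to `σ(X)`, and integrating gives the mean.
-/

open MeasureTheory

theorem Set.mul_indicator_one_eq_indicator {ι M₀ : Type*} [MulZeroOneClass M₀] (s : Set ι)
    (g : ι → M₀) : g * s.indicator (fun _ => 1) = s.indicator g := by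
  ext i
  simpa using (s.indicator_mul_right g (fun _ => 1) (i := i)).symm

theorem ite_mul_eq_of_eq_one_or_eq_neg_one {t : ℝ} (ht : t = 1 ∨ t = -1) (a b : ℝ) :
    (if t = 1 then a else b) * t = (a + b) * (if t = 1 then 1 else 0) - b := by
  rcases ht with rfl | rfl <;> norm_num

theorem half_smul_add_sub_eq_ite_lt {a b : ℝ} (ha : a = 1 ∨ a = -1) (hb : b = 1 ∨ b = -1)
    (hab : b ≤ a) : (1 / 2 : ℝ) • (a + b) - b = if b < a then 1 else 0 := by
  rcases ha with rfl | rfl <;> rcases hb with rfl | rfl <;> norm_num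
  linarith

section
variable {Ω : Type*} {m m0 : MeasurableSpace Ω} {μ : Measure Ω}

theorem condExp_mul_indicator_of_condExp_indicator_ae_eq_const [IsFiniteMeasure μ]
    {A : Set Ω} (hA : MeasurableSet A) {g : Ω → ℝ} (hg : StronglyMeasurable[m] g)
    (hgi : Integrable g μ) {c : ℝ} (hc : μ[A.indicator (fun _ => 1) | m] =ᵐ[μ] fun _ => c) :
    μ[g * A.indicator (fun _ => 1) | m] =ᵐ[μ] c • g := by
  have hind : Integrable (A.indicator fun _ => (1 : ℝ)) μ :=
    (integrable_const 1).indicator hA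
  have hmul : Integrable (g * A.indicator fun _ => 1) μ :=
    A.mul_indicator_one_eq_indicator g ▸ hgi.indicator hA
  filter_upwards [condExp_mul_of_stronglyMeasurable_left hg hmul hind, hc] with ω hgA hcω
  rw [hgA, Pi.mul_apply, hcω, Pi.smul_apply, smul_eq_mul, mul_comm]

theorem condExp_ite_mul_eq_indicator_lt [IsFiniteMeasure μ] (hm : m ≤ m0)
    {Yp Ym T : Ω → ℝ} (hYp : StronglyMeasurable[m] Yp) (hYm : StronglyMeasurable[m] Ym)
    (hT : Measurable T) (hYpv : ∀ ω, Yp ω = 1 ∨ Yp ω = -1) (hYmv : ∀ ω, Ym ω = 1 ∨ Ym ω = -1)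
    (hTv : ∀ ω, T ω = 1 ∨ T ω = -1) (mono : ∀ ω, Ym ω ≤ Yp ω)
    (hT12 : μ[{ω | T ω = 1}.indicator (fun _ => (1 : ℝ)) | m] =ᵐ[μ] fun _ => 1 / 2) :
    μ[fun ω => (if T ω = 1 then Yp ω else Ym ω) * T ω | m]
      =ᵐ[μ] {ω | Ym ω < Yp ω}.indicator (fun _ => (1 : ℝ)) := by
  have integrable_of_pm_one {f : Ω → ℝ} (hf : StronglyMeasurable[m] f)
      (hfv : ∀ ω, f ω = 1 ∨ f ω = -1) : Integrable f μ :=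
    .of_bound (hf.mono hm).aestronglyMeasurable 1 <| ae_of_all _ fun ω => by
      rcases hfv ω with h | h <;> simp [h]
  have hYm_int := integrable_of_pm_one hYm hYmv
  have hsum_int : Integrable (Yp + Ym) μ := (integrable_of_pm_one hYp hYpv).add hYm_int
  have hA : MeasurableSet {ω | T ω = 1} := hT (measurableSet_singleton 1)
  have hmul_int : Integrable ((Yp + Ym) * {ω | T ω = 1}.indicator (fun _ => 1)) μ :=
    {ω | T ω = 1}.mul_indicator_one_eq_indicator (Yp + Ym) ▸ hsum_int.indicator hA
  have hZ : (fun ω => (if T ω = 1 then Yp ω else Ym ω) * T ω)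
      = (Yp + Ym) * {ω | T ω = 1}.indicator (fun _ => 1) - Ym := by
    ext ω
    simp only [ite_mul_eq_of_eq_one_or_eq_neg_one (hTv ω), Pi.sub_apply, Pi.mul_apply,
      Pi.add_apply, Set.indicator_apply, Set.mem_ofPred_eq]
  rw [hZ]
  filter_upwards [condExp_sub hmul_int hYm_int m,
    condExp_mul_indicator_of_condExp_indicator_ae_eq_const hA (hYp.add hYm) hsum_int hT12]
    with ω hsub hmul
  rw [hsub, Pi.sub_apply, hmul, condExp_of_stronglyMeasurable hm hYm hYm_int]
  simp only [Pi.smul_apply, Pi.add_apply, Set.indicator_apply, Set.mem_ofPred_eq]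
  exact half_smul_add_sub_eq_ite_lt (hYpv ω) (hYmv ω) (mono ω)

end

/-- If `Q = 1/2` and monotonicity holds, then `E[Z | X] = ρ(X)` almost surely and hence
`E[Z] = P(R = +1)`: the mean of the observable label `YT` equals the responder rate. -/
theorem stmt_19 {Ω : Type*} [MeasurableSpace Ω] (μ : Measure Ω) [IsProbabilityMeasure μ]
    {p : ℕ} (X : Ω → (Fin p → ℝ)) (hX : Measurable X)
    (Yp Ym T : Ω → ℝ) (hYp : Measurable Yp) (hYm : Measurable Ym) (hT : Measurable T)
    (hYpv : ∀ ω, Yp ω = 1 ∨ Yp ω = -1) (hYmv : ∀ ω, Ym ω = 1 ∨ Ym ω = -1)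
    (hTv : ∀ ω, T ω = 1 ∨ T ω = -1)
    (mono : ∀ ω, Ym ω ≤ Yp ω)
    (hT12 : μ[{ω | T ω = 1}.indicator (fun _ => (1 : ℝ)) |
        MeasurableSpace.comap (fun ω => (X ω, Yp ω, Ym ω)) inferInstance]
      =ᵐ[μ] fun _ => 1 / 2)
    (Y : Ω → ℝ) (hY : ∀ ω, Y ω = if T ω = 1 then Yp ω else Ym ω) :
    (μ[fun ω => Y ω * T ω | MeasurableSpace.comap X inferInstance]
      =ᵐ[μ] μ[{ω | Ym ω < Yp ω}.indicator (fun _ => (1 : ℝ)) |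
        MeasurableSpace.comap X inferInstance]) ∧
    (∫ ω, Y ω * T ω ∂μ) = (μ {ω | Ym ω < Yp ω}).toReal := by
  set V := fun ω => (X ω, Yp ω, Ym ω)
  have hV : Measurable[MeasurableSpace.comap V inferInstance] V := comap_measurable V
  have hle : MeasurableSpace.comap V inferInstance ≤ ‹_› :=
    (hX.prodMk (hYp.prodMk hYm)).comap_le
  have hXV : MeasurableSpace.comap X inferInstance ≤ MeasurableSpace.comap V inferInstance :=
    (measurable_fst.comp hV).comap_le
  have hZ : μ[fun ω => Y ω * T ω | MeasurableSpace.comap V inferInstance]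
      =ᵐ[μ] {ω | Ym ω < Yp ω}.indicator (fun _ => 1) := by
    simp only [hY]
    exact condExp_ite_mul_eq_indicator_lt hle
      (measurable_fst.comp (measurable_snd.comp hV)).stronglyMeasurable
      (measurable_snd.comp (measurable_snd.comp hV)).stronglyMeasurable
      hT hYpv hYmv hTv mono hT12
  refine ⟨(condExp_condExp_of_le hXV hle).symm.trans (condExp_congr_ae hZ), ?_⟩
  rw [← integral_condExp hle, integral_congr_ae hZ]
  exact integral_indicator_one (measurableSet_lt hYm hYp)
end
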